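/- arXiv:2007.16036 — 2 statements merged into one kernel-verified Lean document; each statement's English description precedes it below -/
import Mathlib

section
/- The horizontal separating-plane constraints (constraints (21)–(30) restricted to rows) force the set of rows containing an interior reservoir cell to be contiguous. Precisely: let n be a positive integer, let y : {1,…,n} × {1,…,n} → ℤ take values in {0,1}, let up, down : {1,…,n} → ℤ take values in {0,1}, and let M be a real (or integer) constant, such that for every row i: (a) 1 - Σ_{j=1}^{n} y(i,j) ≤ up(i) + down(i); (b) Σ_{k>i, 1≤j≤n} y(k,j) ≤ M·(1 - down(i)); (c) Σ_{k<i, 1≤j≤n} y(k,j) ≤ M·(1 - up(i)). Then there do not exist rows i₁ < i < i₂ such that row i₁ contains a cell with y = 1, row i₂ contains a cell with y = 1, and row i contains no cell with y = 1. -/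
open Finset in
/-- The horizontal separating-plane constraints force the set
of rows containing an interior reservoir cell to be contiguous. -/
theorem stmt_7 (n : ℤ) (hn : 0 < n) (y : ℤ → ℤ → ℤ) (up down : ℤ → ℤ) (M : ℤ)
    (hy : ∀ i ∈ Finset.Icc 1 n, ∀ j ∈ Finset.Icc 1 n, y i j = 0 ∨ y i j = 1)
    (hup : ∀ i ∈ Finset.Icc 1 n, up i = 0 ∨ up i = 1)
    (hdown : ∀ i ∈ Finset.Icc 1 n, down i = 0 ∨ down i = 1)
    (ha : ∀ i ∈ Finset.Icc 1 n,
      1 - ∑ j ∈ Finset.Icc 1 n, y i j ≤ up i + down i)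
    (hb : ∀ i ∈ Finset.Icc 1 n,
      ∑ k ∈ (Finset.Icc 1 n).filter (fun k => i < k), ∑ j ∈ Finset.Icc 1 n, y k j
        ≤ M * (1 - down i))
    (hc : ∀ i ∈ Finset.Icc 1 n,
      ∑ k ∈ (Finset.Icc 1 n).filter (fun k => k < i), ∑ j ∈ Finset.Icc 1 n, y k j
        ≤ M * (1 - up i)) :
    ¬ ∃ i₁ i i₂ : ℤ, i₁ ∈ Finset.Icc 1 n ∧ i ∈ Finset.Icc 1 n ∧ i₂ ∈ Finset.Icc 1 n ∧
      i₁ < i ∧ i < i₂ ∧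
      (∃ j ∈ Finset.Icc 1 n, y i₁ j = 1) ∧
      (∃ j ∈ Finset.Icc 1 n, y i₂ j = 1) ∧
      (∀ j ∈ Finset.Icc 1 n, y i j ≠ 1) := by
  rintro ⟨i₁, i, i₂, h1, hi, h2, hlt1, hlt2, ⟨j₁, hj₁, hy₁⟩, ⟨j₂, hj₂, hy₂⟩, hempty⟩
  -- row sums are nonnegative
  have hnonneg : ∀ k ∈ Finset.Icc 1 n, 0 ≤ ∑ j ∈ Finset.Icc 1 n, y k j := by
    intro k hk
    apply Finset.sum_nonneg
    intro j hj
    rcases hy k hk j hj with h | h <;> simp [h]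
  have hrow : ∀ k ∈ Finset.Icc 1 n, (∃ j ∈ Finset.Icc 1 n, y k j = 1) →
      1 ≤ ∑ j ∈ Finset.Icc 1 n, y k j := by
    rintro k hk ⟨j, hj, hyj⟩
    calc (1 : ℤ) = y k j := hyj.symm
    _ ≤ _ := Finset.single_le_sum (fun j hj => by
        rcases hy k hk j hj with h | h <;> simp [h]) hj
  -- row i sum = 0
  have hzero : ∑ j ∈ Finset.Icc 1 n, y i j = 0 := by
    apply le_antisymm _ (hnonneg i hi)
    apply Finset.sum_nonpos
    intro j hj
    rcases hy i hi j hj with h | h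
    · simp [h]
    · exact absurd h (hempty j hj)
  have hud := ha i hi
  rw [hzero] at hud
  -- sums over filters positive
  have hposb : 0 < ∑ k ∈ (Finset.Icc 1 n).filter (fun k => i < k),
      ∑ j ∈ Finset.Icc 1 n, y k j := by
    apply lt_of_lt_of_le (by norm_num : (0:ℤ) < 1)
    calc (1:ℤ) ≤ ∑ j ∈ Finset.Icc 1 n, y i₂ j := hrow i₂ h2 ⟨j₂, hj₂, hy₂⟩
    _ ≤ _ := Finset.single_le_sum (fun k hk => hnonneg k (Finset.mem_filter.mp hk).1)
        (Finset.mem_filter.mpr ⟨h2, hlt2⟩)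
  have hposc : 0 < ∑ k ∈ (Finset.Icc 1 n).filter (fun k => k < i),
      ∑ j ∈ Finset.Icc 1 n, y k j := by
    apply lt_of_lt_of_le (by norm_num : (0:ℤ) < 1)
    have hmem : i₁ ∈ (Finset.Icc 1 n).filter (fun k => k < i) :=
      Finset.mem_filter.mpr ⟨h1, hlt1⟩
    calc (1:ℤ) ≤ ∑ j ∈ Finset.Icc 1 n, y i₁ j := hrow i₁ h1 ⟨j₁, hj₁, hy₁⟩
    _ ≤ _ := Finset.single_le_sum (fun k hk => hnonneg k (Finset.mem_filter.mp hk).1) hmem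
  rcases hdown i hi with hd | hd
  · -- then up i = 1 (since up+down ≥ 1), use hc
    have hu : up i = 1 := by
      rcases hup i hi with h | h
      · omega
      · exact h
    have := hc i hi
    rw [hu] at this
    simp at this
    omega
  · have := hb i hi
    rw [hd] at this
    simp at this
    omega
end

section
/- The vertical separating-plane constraints (constraints (21)–(30) restricted to columns) force the set of columns containing an interior reservoir cell to be contiguous. Precisely: let n be a positive integer, let y : {1,…,n} × {1,…,n} → ℤ take values in {0,1}, let left, right : {1,…,n} → ℤ take values in {0,1}, and let M be a real (or integer) constant, such that for every column j: (a) 1 - Σ_{i=1}^{n} y(i,j) ≤ left(j) + right(j); (b) Σ_{1≤i≤n, k>j} y(i,k) ≤ M·(1 - left(j)); (c) Σ_{1≤i≤n, k<j} y(i,k) ≤ M·(1 - right(j)). Then there do not exist columns j₁ < j < j₂ such that column j₁ contains a cell with y = 1, column j₂ contains a cell with y = 1, and column j contains no cell with y = 1. -/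
open Finset in
/-- The vertical separating-plane constraints force the set
of columns containing an interior reservoir cell to be contiguous. -/
theorem stmt_8 (n : ℤ) (hn : 0 < n) (y : ℤ → ℤ → ℤ) (left right : ℤ → ℤ) (M : ℤ)
    (hy : ∀ i ∈ Finset.Icc 1 n, ∀ j ∈ Finset.Icc 1 n, y i j = 0 ∨ y i j = 1)
    (hleft : ∀ j ∈ Finset.Icc 1 n, left j = 0 ∨ left j = 1)
    (hright : ∀ j ∈ Finset.Icc 1 n, right j = 0 ∨ right j = 1)
    (ha : ∀ j ∈ Finset.Icc 1 n,
      1 - ∑ i ∈ Finset.Icc 1 n, y i j ≤ left j + right j)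
    (hb : ∀ j ∈ Finset.Icc 1 n,
      ∑ i ∈ Finset.Icc 1 n, ∑ k ∈ (Finset.Icc 1 n).filter (fun k => j < k), y i k
        ≤ M * (1 - left j))
    (hc : ∀ j ∈ Finset.Icc 1 n,
      ∑ i ∈ Finset.Icc 1 n, ∑ k ∈ (Finset.Icc 1 n).filter (fun k => k < j), y i k
        ≤ M * (1 - right j)) :
    ¬ ∃ j₁ j j₂ : ℤ, j₁ ∈ Finset.Icc 1 n ∧ j ∈ Finset.Icc 1 n ∧ j₂ ∈ Finset.Icc 1 n ∧
      j₁ < j ∧ j < j₂ ∧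
      (∃ i ∈ Finset.Icc 1 n, y i j₁ = 1) ∧
      (∃ i ∈ Finset.Icc 1 n, y i j₂ = 1) ∧
      (∀ i ∈ Finset.Icc 1 n, y i j ≠ 1) := by
  rintro ⟨j₁, j, j₂, hj₁, hj, hj₂, hlt1, hlt2, ⟨i₁, hi₁, hy1⟩, ⟨i₂, hi₂, hy2⟩, hempty⟩
  have hsum0 : ∑ i ∈ Finset.Icc 1 n, y i j = 0 := by
    apply Finset.sum_eq_zero
    intro i hi
    rcases hy i hi j hj with h | h
    · exact h
    · exact absurd h (hempty i hi)
  have hall : left j = 1 ∨ right j = 1 := by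
    have := ha j hj
    rw [hsum0] at this
    rcases hleft j hj with h | h <;> rcases hright j hj with h' | h' <;> omega
  -- a helper: sum of nonneg entries containing a 1 is ≥ 1
  have key : ∀ (P : ℤ → Prop) [DecidablePred P] (i₀ k₀ : ℤ),
      i₀ ∈ Finset.Icc 1 n → k₀ ∈ Finset.Icc 1 n → P k₀ → y i₀ k₀ = 1 →
      1 ≤ ∑ i ∈ Finset.Icc 1 n, ∑ k ∈ (Finset.Icc 1 n).filter (fun k => P k), y i k := by
    intro P _ i₀ k₀ hi₀ hk₀ hP hy₀
    have hnonneg : ∀ i ∈ Finset.Icc 1 n, ∀ k ∈ (Finset.Icc 1 n).filter (fun k => P k),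
        0 ≤ y i k := by
      intro i hi k hk
      rcases hy i hi k (Finset.mem_filter.mp hk).1 with h | h <;> omega
    have h1 : 1 ≤ ∑ k ∈ (Finset.Icc 1 n).filter (fun k => P k), y i₀ k := by
      have hk₀' : k₀ ∈ (Finset.Icc 1 n).filter (fun k => P k) :=
        Finset.mem_filter.mpr ⟨hk₀, hP⟩
      calc (1 : ℤ) = y i₀ k₀ := hy₀.symm
        _ ≤ _ := Finset.single_le_sum (fun k hk => hnonneg i₀ hi₀ k hk) hk₀'
    calc (1 : ℤ) ≤ ∑ k ∈ (Finset.Icc 1 n).filter (fun k => P k), y i₀ k := h1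
      _ ≤ _ := Finset.single_le_sum
          (fun i hi => Finset.sum_nonneg (fun k hk => hnonneg i hi k hk)) hi₀
  rcases hall with h | h
  · have hb' := hb j hj
    rw [h] at hb'
    simp at hb'
    have := key (fun k => j < k) i₂ j₂ hi₂ hj₂ hlt2 hy2
    omega
  · have hc' := hc j hj
    rw [h] at hc'
    simp at hc'
    have := key (fun k => k < j) i₁ j₁ hi₁ hj₁ hlt1 hy1
    omega
end
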